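/- arXiv:2201.02147 — 2 statements merged into one kernel-verified Lean document; each statement's English description precedes it below -/
import Mathlib

section
/- In an abelian category \(\mathcal{A}\), the assignments \(((\mathcal{U},\mathcal{V}),(\mathcal{T},\mathcal{F})) \mapsto (\mathcal{U}, \mathcal{V}\cap\mathcal{T}, \mathcal{F})\) and \((\mathcal{U},\mathcal{S},\mathcal{F}) \mapsto ((\mathcal{U},\mathcal{S}\star\mathcal{F}),(\mathcal{U}\star\mathcal{S},\mathcal{F}))\) are mutually inverse bijections between: (1) pairs of torsion pairs \((\mathcal{U},\mathcal{V})\), \((\mathcal{T},\mathcal{F})\) with \(\mathcal{U}\subseteq\mathcal{T}\), and (2) filtration triples \((\mathcal{U},\mathcal{S},\mathcal{F})\). -/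
open CategoryTheory Limits

universe v u

namespace Mut

variable {C : Type u} [Category.{v} C]

/-- A class of objects closed under isomorphisms. -/
def IsoClosed (S : Set C) : Prop := ∀ ⦃X Y : C⦄, (X ≅ Y) → X ∈ S → Y ∈ S

/-- `g : E ⟶ X` is an `M`-precover of `X`. -/
def IsPrecover (M : Set C) {E X : C} (g : E ⟶ X) : Prop :=
  E ∈ M ∧ ∀ ⦃E' : C⦄ (f : E' ⟶ X), E' ∈ M → ∃ h : E' ⟶ E, h ≫ g = f

/-- `g : E ⟶ X` is an `M`-cover of `X`. -/
def IsCover (M : Set C) {E X : C} (g : E ⟶ X) : Prop :=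
  IsPrecover M g ∧ ∀ h : E ⟶ E, h ≫ g = g → IsIso h

/-- `g : X ⟶ E` is an `M`-preenvelope of `X`. -/
def IsPreenvelope (M : Set C) {X E : C} (g : X ⟶ E) : Prop :=
  E ∈ M ∧ ∀ ⦃E' : C⦄ (f : X ⟶ E'), E' ∈ M → ∃ h : E ⟶ E', g ≫ h = f

/-- `g : X ⟶ E` is an `M`-envelope of `X`. -/
def IsEnvelope (M : Set C) {X E : C} (g : X ⟶ E) : Prop :=
  IsPreenvelope M g ∧ ∀ h : E ⟶ E, g ≫ h = g → IsIso h

section Abelian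

variable [Abelian C]

/-- `0 ⟶ A ⟶ X ⟶ B ⟶ 0` is a short exact sequence. -/
def SES {A X B : C} (i : A ⟶ X) (p : X ⟶ B) : Prop :=
  ∃ w : i ≫ p = 0, (ShortComplex.mk i p w).ShortExact

/-- A class of objects closed under extensions. -/
def ClosedUnderExtensions (S : Set C) : Prop :=
  ∀ ⦃A X B : C⦄ (i : A ⟶ X) (p : X ⟶ B), SES i p → A ∈ S → B ∈ S → X ∈ S

/-- A torsion pair `(T, F)` in an abelian category: strict (iso-closed) full
subcategories with no nonzero maps from `T` to `F`, such that every object is an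
extension of an object of `F` by an object of `T`. -/
structure IsTorsionPair (T F : Set C) : Prop where
  isoClosed_torsion : IsoClosed T
  isoClosed_free : IsoClosed F
  hom_zero : ∀ ⦃X Y : C⦄, X ∈ T → Y ∈ F → ∀ f : X ⟶ Y, f = 0
  exists_ses : ∀ X : C, ∃ (A B : C) (i : A ⟶ X) (p : X ⟶ B),
    A ∈ T ∧ B ∈ F ∧ SES i p

/-- `M ⋆ N`: objects that are extensions of an object of `N` by an object of `M`. -/
def star (M N : Set C) : Set C :=
  {X | ∃ (A B : C) (i : A ⟶ X) (p : X ⟶ B), A ∈ M ∧ B ∈ N ∧ SES i p}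

/-- `X` has a filtration `0 = X₀ ⊆ X₁ ⊆ X₂ ⊆ X₃ = X` with `X₁ ∈ U`,
`X₂/X₁ ∈ S` and `X/X₂ ∈ F`. -/
def HasFiltration (U S F : Set C) (X : C) : Prop :=
  ∃ (X₁ X₂ : C) (a : X₁ ⟶ X₂) (b : X₂ ⟶ X), Mono a ∧ Mono b ∧
    X₁ ∈ U ∧ cokernel a ∈ S ∧ cokernel b ∈ F

/-- A filtration triple `(U, S, F)` in an abelian category. -/
structure IsFiltrationTriple (U S F : Set C) : Prop where
  isoClosed_U : IsoClosed U
  isoClosed_S : IsoClosed S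
  isoClosed_F : IsoClosed F
  hom_US : ∀ ⦃X Y : C⦄, X ∈ U → Y ∈ S → ∀ f : X ⟶ Y, f = 0
  hom_UF : ∀ ⦃X Y : C⦄, X ∈ U → Y ∈ F → ∀ f : X ⟶ Y, f = 0
  hom_SF : ∀ ⦃X Y : C⦄, X ∈ S → Y ∈ F → ∀ f : X ⟶ Y, f = 0
  filt : ∀ X : C, HasFiltration U S F X

/-- A wide subcategory: an iso-closed class closed under kernels, cokernels
and extensions. -/
def IsWide (S : Set C) : Prop :=
  IsoClosed S ∧ ClosedUnderExtensions S ∧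
    (∀ ⦃X Y : C⦄ (f : X ⟶ Y), X ∈ S → Y ∈ S → kernel f ∈ S) ∧
    (∀ ⦃X Y : C⦄ (f : X ⟶ Y), X ∈ S → Y ∈ S → cokernel f ∈ S)

end Abelian

section Aux

variable [Abelian C]

open ZeroObject

lemma ses_desc {A X B Y : C} {i : A ⟶ X} {p : X ⟶ B} (h : SES i p)
    (f : X ⟶ Y) (hf : i ≫ f = 0) : ∃ g : B ⟶ Y, p ≫ g = f := by
  obtain ⟨w, h⟩ := h
  have := h.epi_g
  exact h.exact.desc' f hf

lemma ses_lift {A X B Y : C} {i : A ⟶ X} {p : X ⟶ B} (h : SES i p)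
    (f : Y ⟶ X) (hf : f ≫ p = 0) : ∃ g : Y ⟶ A, g ≫ i = f := by
  obtain ⟨w, h⟩ := h
  have := h.mono_f
  exact h.exact.lift' f hf

lemma ses_mono {A X B : C} {i : A ⟶ X} {p : X ⟶ B} (h : SES i p) : Mono i := by
  obtain ⟨w, h⟩ := h; exact h.mono_f

lemma ses_epi {A X B : C} {i : A ⟶ X} {p : X ⟶ B} (h : SES i p) : Epi p := by
  obtain ⟨w, h⟩ := h; exact h.epi_g

lemma ses_isIso_i {A X B : C} {i : A ⟶ X} {p : X ⟶ B} (h : SES i p) (hp : p = 0) :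
    IsIso i := by
  obtain ⟨w, h⟩ := h
  have := h.mono_f
  have : Epi i := h.exact.epi_f hp
  exact isIso_of_mono_of_epi i

lemma ses_isIso_p {A X B : C} {i : A ⟶ X} {p : X ⟶ B} (h : SES i p) (hi : i = 0) :
    IsIso p := by
  obtain ⟨w, h⟩ := h
  have := h.epi_g
  have : Mono p := h.exact.mono_g hi
  exact isIso_of_mono_of_epi p

lemma ses_of_mono {A X : C} (i : A ⟶ X) [Mono i] : SES i (cokernel.π i) :=
  ⟨cokernel.condition i,
    ShortComplex.ShortExact.mk'
      ((ShortComplex.mk i (cokernel.π i) (cokernel.condition i)).exact_of_g_is_cokernel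
        (cokernelIsCokernel i)) inferInstance inferInstance⟩

lemma ses_of_iso {A X B A' X' B' : C} {i : A ⟶ X} {p : X ⟶ B}
    (h : SES i p) (eA : A ≅ A') (eX : X ≅ X') (eB : B ≅ B')
    (i' : A' ⟶ X') (p' : X' ⟶ B')
    (hi : eA.hom ≫ i' = i ≫ eX.hom) (hp : eX.hom ≫ p' = p ≫ eB.hom) :
    SES i' p' := by
  obtain ⟨w, h⟩ := h
  have w' : i' ≫ p' = 0 := by
    rw [← cancel_epi eA.hom, ← Category.assoc, hi, Category.assoc, hp,
      ← Category.assoc, w, zero_comp, comp_zero]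
  exact ⟨w', ShortComplex.shortExact_of_iso
    (ShortComplex.isoMk (S₁ := ShortComplex.mk i p w) (S₂ := ShortComplex.mk i' p' w')
      eA eX eB hi hp) h⟩

lemma star_isoClosed (M N : Set C) : IsoClosed (star M N) := by
  rintro X Y e ⟨A, B, i, p, hA, hB, hses⟩
  exact ⟨A, B, i ≫ e.hom, e.inv ≫ p, hA, hB,
    ses_of_iso hses (Iso.refl A) e (Iso.refl B) _ _ (by simp) (by simp)⟩

lemma ses_cokernel_mem {S : Set C} (hS : IsoClosed S) {A X B : C} {i : A ⟶ X} {p : X ⟶ B}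
    (h : SES i p) (hB : B ∈ S) : cokernel i ∈ S := by
  obtain ⟨w, h⟩ := h
  have := h.mono_f
  have := h.epi_g
  exact hS (h.exact.gIsCokernel.coconePointUniqueUpToIso
    (colimit.isColimit (parallelPair i 0))) hB

lemma ses_zero_right (X : C) : SES (𝟙 X) (0 : X ⟶ (0 : C)) := by
  have hepi : Epi (0 : X ⟶ (0 : C)) := ⟨fun g h _ => (isZero_zero C).eq_of_src g h⟩
  refine ⟨by simp, ShortComplex.ShortExact.mk' ?_ inferInstance hepi⟩
  rw [ShortComplex.exact_iff_epi _ rfl]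
  exact inferInstance

lemma ses_zero_left (X : C) : SES (0 : (0 : C) ⟶ X) (𝟙 X) := by
  have hmono : Mono (0 : (0 : C) ⟶ X) := ⟨fun g h _ => (isZero_zero C).eq_of_tgt g h⟩
  refine ⟨by simp, ShortComplex.ShortExact.mk' ?_ hmono inferInstance⟩
  rw [ShortComplex.exact_iff_mono _ rfl]
  exact inferInstance

lemma tp_mem_torsion_iff {T F : Set C} (h : IsTorsionPair T F) {X : C} :
    X ∈ T ↔ ∀ ⦃Y : C⦄, Y ∈ F → ∀ f : X ⟶ Y, f = 0 := by
  constructor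
  · exact fun hX Y hY f => h.hom_zero hX hY f
  · intro hX
    obtain ⟨A, B, i, p, hA, hB, hses⟩ := h.exists_ses X
    have := ses_isIso_i hses (hX hB p)
    exact h.isoClosed_torsion (asIso i) hA

lemma tp_mem_free_iff {T F : Set C} (h : IsTorsionPair T F) {X : C} :
    X ∈ F ↔ ∀ ⦃Y : C⦄, Y ∈ T → ∀ f : Y ⟶ X, f = 0 := by
  constructor
  · exact fun hX Y hY f => h.hom_zero hY hX f
  · intro hX
    obtain ⟨A, B, i, p, hA, hB, hses⟩ := h.exists_ses X
    have := ses_isIso_p hses (hX hA i)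
    exact h.isoClosed_free (asIso p).symm hB

lemma tp_torsion_quot {T F : Set C} (h : IsTorsionPair T F) {X B : C} (p : X ⟶ B)
    (hp : Epi p) (hX : X ∈ T) : B ∈ T := by
  rw [tp_mem_torsion_iff h]
  intro Y hY f
  have hz : p ≫ f = 0 := h.hom_zero hX hY _
  rw [← cancel_epi p, hz, comp_zero]

lemma tp_free_sub {T F : Set C} (h : IsTorsionPair T F) {A X : C} (i : A ⟶ X)
    (hi : Mono i) (hX : X ∈ F) : A ∈ F := by
  rw [tp_mem_free_iff h]
  intro Y hY f
  have hz : f ≫ i = 0 := h.hom_zero hY hX _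
  rw [← cancel_mono i, hz, zero_comp]

lemma tp_torsion_ext {T F : Set C} (h : IsTorsionPair T F) {A X B : C}
    {i : A ⟶ X} {p : X ⟶ B} (hses : SES i p) (hA : A ∈ T) (hB : B ∈ T) : X ∈ T := by
  rw [tp_mem_torsion_iff h]
  intro Y hY f
  obtain ⟨g, hg⟩ := ses_desc hses f (h.hom_zero hA hY _)
  rw [← hg, h.hom_zero hB hY g, comp_zero]

lemma tp_free_ext {T F : Set C} (h : IsTorsionPair T F) {A X B : C}
    {i : A ⟶ X} {p : X ⟶ B} (hses : SES i p) (hA : A ∈ F) (hB : B ∈ F) : X ∈ F := by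
  rw [tp_mem_free_iff h]
  intro Y hY f
  obtain ⟨g, hg⟩ := ses_lift hses f (h.hom_zero hY hB _)
  rw [← hg, h.hom_zero hY hA g, zero_comp]

lemma exact_mono_coker {A X : C} (m : A ⟶ X) [Mono m] :
    (ShortComplex.mk m (cokernel.π m) (cokernel.condition m)).Exact :=
  (ShortComplex.mk m (cokernel.π m) (cokernel.condition m)).exact_of_g_is_cokernel
    (cokernelIsCokernel m)

/-- The Noether short exact sequence `X₂/X₁ → X/X₁ → X/X₂`. -/
lemma noether {X₁ X₂ X : C} (a : X₁ ⟶ X₂) (b : X₂ ⟶ X) [Mono a] [Mono b] :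
    SES (cokernel.desc a (b ≫ cokernel.π (a ≫ b))
          (by rw [← Category.assoc, cokernel.condition]))
        (cokernel.desc (a ≫ b) (cokernel.π b)
          (by rw [Category.assoc, cokernel.condition, comp_zero])) := by
  set u := cokernel.desc a (b ≫ cokernel.π (a ≫ b))
    (by rw [← Category.assoc, cokernel.condition]) with hu
  set v := cokernel.desc (a ≫ b) (cokernel.π b)
    (by rw [Category.assoc, cokernel.condition, comp_zero]) with hv
  have hπu : cokernel.π a ≫ u = b ≫ cokernel.π (a ≫ b) := cokernel.π_desc _ _ _
  have hπv : cokernel.π (a ≫ b) ≫ v = cokernel.π b := cokernel.π_desc _ _ _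
  have w : u ≫ v = 0 := by
    rw [← cancel_epi (cokernel.π a), ← Category.assoc, hπu, Category.assoc, hπv,
      cokernel.condition, comp_zero]
  have hmono : Mono u := by
    apply Preadditive.mono_of_cancel_zero
    intro W z hz
    obtain ⟨W', e, hE, w', hw'⟩ :=
      surjective_up_to_refinements_of_epi (cokernel.π a) z
    have h1 : (w' ≫ b) ≫ cokernel.π (a ≫ b) = 0 := by
      rw [Category.assoc, ← hπu, ← Category.assoc, ← hw', Category.assoc, hz, comp_zero]
    obtain ⟨W'', e', hE', t, ht⟩ :=
      ((ShortComplex.mk (a ≫ b) (cokernel.π (a ≫ b)) (cokernel.condition _)).exact_iff_exact_up_to_refinements.mp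
        (exact_mono_coker (a ≫ b))) (w' ≫ b) h1
    rw [← Category.assoc] at ht
    have ht2 : e' ≫ w' = t ≫ a := by
      refine (cancel_mono b).1 ?_
      conv_rhs => rw [Category.assoc]
      exact ht
    have hec : Epi (e' ≫ e) := epi_comp _ _
    refine (cancel_epi (e' ≫ e)).1 ?_
    rw [comp_zero, Category.assoc, hw', ← Category.assoc, ht2, Category.assoc,
      cokernel.condition, comp_zero]
  have hepi : Epi v := by
    have : Epi (cokernel.π (a ≫ b) ≫ v) := by rw [hπv]; infer_instance
    exact epi_of_epi (cokernel.π (a ≫ b)) v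
  refine ⟨w, ShortComplex.ShortExact.mk' ?_ hmono hepi⟩
  rw [ShortComplex.exact_iff_exact_up_to_refinements]
  intro W x hx
  obtain ⟨W', e, hE, y, hy⟩ :=
    surjective_up_to_refinements_of_epi (cokernel.π (a ≫ b)) x
  have h1 : y ≫ cokernel.π b = 0 := by
    rw [← hπv, ← Category.assoc, ← hy, Category.assoc, hx, comp_zero]
  obtain ⟨W'', e', hE', t, ht⟩ :=
    ((ShortComplex.mk b (cokernel.π b) (cokernel.condition b)).exact_iff_exact_up_to_refinements.mp
      (exact_mono_coker b)) y h1
  refine ⟨W'', e' ≫ e, epi_comp _ _, t ≫ cokernel.π a, ?_⟩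
  have ht' : e' ≫ y = t ≫ b := ht
  show (e' ≫ e) ≫ x = (t ≫ cokernel.π a) ≫ u
  calc (e' ≫ e) ≫ x = e' ≫ (y ≫ cokernel.π (a ≫ b)) := by rw [Category.assoc, hy]
    _ = (t ≫ b) ≫ cokernel.π (a ≫ b) := by rw [← Category.assoc, ht']
    _ = (t ≫ cokernel.π a) ≫ u := by rw [Category.assoc, Category.assoc, hπu]

end Aux

open ZeroObject in
/-- The assignments between pairs of nested torsion pairs and filtration triples
are mutually inverse bijections. -/
theorem statement_4 [Abelian C] :
    (∀ U V T F : Set C, IsTorsionPair U V → IsTorsionPair T F → U ⊆ T →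
      IsFiltrationTriple U (V ∩ T) F ∧ star U (V ∩ T) = T ∧ star (V ∩ T) F = V) ∧
    (∀ U S F : Set C, IsFiltrationTriple U S F →
      IsTorsionPair U (star S F) ∧ IsTorsionPair (star U S) F ∧
      U ⊆ star U S ∧ star S F ∩ star U S = S) := by
  constructor
  · intro U V T F htUV htTF hUT
    have hFV : F ⊆ V := fun X hX => (tp_mem_free_iff htUV).2
      (fun Y hY f => htTF.hom_zero (hUT hY) hX f)
    refine ⟨?_, ?_, ?_⟩
    · refine ⟨htUV.isoClosed_torsion,
        fun X Y e hX => ⟨htUV.isoClosed_free e hX.1, htTF.isoClosed_torsion e hX.2⟩,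
        htTF.isoClosed_free,
        fun X Y hX hY f => htUV.hom_zero hX hY.1 f,
        fun X Y hX hY f => htTF.hom_zero (hUT hX) hY f,
        fun X Y hX hY f => htTF.hom_zero hX.2 hY f, ?_⟩
      intro X
      obtain ⟨A₂, B₂, b, p, hA₂, hB₂, hses₂⟩ := htTF.exists_ses X
      obtain ⟨X₁, B₁, a, q, hX₁, hB₁, hses₁⟩ := htUV.exists_ses A₂
      refine ⟨X₁, A₂, a, b, ses_mono hses₁, ses_mono hses₂, hX₁, ?_, ?_⟩
      · exact ⟨ses_cokernel_mem htUV.isoClosed_free hses₁ hB₁,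
          ses_cokernel_mem htTF.isoClosed_torsion hses₁
            (tp_torsion_quot htTF q (ses_epi hses₁) hA₂)⟩
      · exact ses_cokernel_mem htTF.isoClosed_free hses₂ hB₂
    · ext X
      constructor
      · rintro ⟨A, B, i, p, hA, hB, hses⟩
        exact tp_torsion_ext htTF hses (hUT hA) hB.2
      · intro hX
        obtain ⟨A, B, i, p, hA, hB, hses⟩ := htUV.exists_ses X
        exact ⟨A, B, i, p, hA, ⟨hB, tp_torsion_quot htTF p (ses_epi hses) hX⟩, hses⟩
    · ext X
      constructor
      · rintro ⟨A, B, i, p, hA, hB, hses⟩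
        exact tp_free_ext htUV hses hA.1 (hFV hB)
      · intro hX
        obtain ⟨A, B, i, p, hA, hB, hses⟩ := htTF.exists_ses X
        exact ⟨A, B, i, p, ⟨tp_free_sub htUV i (ses_mono hses) hX, hA⟩, hB, hses⟩
  · intro U S F ft
    obtain ⟨Z₁, Z₂, a0, b0, ma0, mb0, h01, h02, h03⟩ := ft.filt 0
    haveI := ma0; haveI := mb0
    have hz2 : IsZero Z₂ := IsZero.of_mono b0 (isZero_zero C)
    have hz1 : IsZero Z₁ := IsZero.of_mono a0 hz2
    have hzca : IsZero (cokernel a0) := IsZero.of_epi (cokernel.π a0) hz2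
    have hzcb : IsZero (cokernel b0) := IsZero.of_epi (cokernel.π b0) (isZero_zero C)
    have hU0 : (0 : C) ∈ U := ft.isoClosed_U (hz1.iso (isZero_zero C)) h01
    have hS0 : (0 : C) ∈ S := ft.isoClosed_S (hzca.iso (isZero_zero C)) h02
    have hF0 : (0 : C) ∈ F := ft.isoClosed_F (hzcb.iso (isZero_zero C)) h03
    have hUS : U ⊆ star U S := fun X hX => ⟨X, 0, 𝟙 X, 0, hX, hS0, ses_zero_right X⟩
    have hSUS : S ⊆ star U S := fun X hX => ⟨0, X, 0, 𝟙 X, hU0, hX, ses_zero_left X⟩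
    have hSSF : S ⊆ star S F := fun X hX => ⟨X, 0, 𝟙 X, 0, hX, hF0, ses_zero_right X⟩
    have tp1 : IsTorsionPair U (star S F) := by
      refine ⟨ft.isoClosed_U, star_isoClosed _ _, ?_, ?_⟩
      · rintro X Y hX ⟨A, B, i, p, hA, hB, hses⟩ f
        obtain ⟨g, hg⟩ := ses_lift hses f (ft.hom_UF hX hB (f ≫ p))
        rw [← hg, ft.hom_US hX hA g, zero_comp]
      · intro X
        obtain ⟨X₁, X₂, a, b, ma, mb, h1, h2, h3⟩ := ft.filt X
        haveI := ma; haveI := mb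
        refine ⟨X₁, cokernel (a ≫ b), a ≫ b, cokernel.π _, h1, ?_, ses_of_mono _⟩
        exact ⟨cokernel a, cokernel b, _, _, h2, h3, noether a b⟩
    have tp2 : IsTorsionPair (star U S) F := by
      refine ⟨star_isoClosed _ _, ft.isoClosed_F, ?_, ?_⟩
      · rintro X Y ⟨A, B, i, p, hA, hB, hses⟩ hY f
        obtain ⟨g, hg⟩ := ses_desc hses f (ft.hom_UF hA hY (i ≫ f))
        rw [← hg, ft.hom_SF hB hY g, comp_zero]
      · intro X
        obtain ⟨X₁, X₂, a, b, ma, mb, h1, h2, h3⟩ := ft.filt X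
        haveI := ma; haveI := mb
        exact ⟨X₂, cokernel b, b, cokernel.π b,
          ⟨X₁, cokernel a, a, cokernel.π a, h1, h2, ses_of_mono a⟩, h3, ses_of_mono b⟩
    refine ⟨tp1, tp2, hUS, ?_⟩
    ext X
    constructor
    · rintro ⟨hXSF, A, B, i, p, hA, hB, hses⟩
      have hi : i = 0 := tp1.hom_zero hA hXSF i
      have := ses_isIso_p hses hi
      exact ft.isoClosed_S (asIso p).symm hB
    · exact fun hX => ⟨hSSF hX, hSUS hX⟩

end Mut
end

section
/- Let \(\mathcal{H}\) be an abelian length category with a torsion pair \((\mathcal{X},\mathcal{Y})\) and let \(\widecheck{\mathcal{X}} = \{X \in \mathcal{H} \mid \text{every } f : X \to Y \text{ with } Y\in\mathcal{Y} \text{ has } \mathrm{coker}(f)\in\mathcal{Y}\}\). Then \(\widecheck{\mathcal{X}} \cap \mathcal{Y}\) is a wide subcategory of \(\mathcal{H}\), i.e. it is closed under kernels, cokernels, and extensions. -/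
open CategoryTheory Limits

universe v u

namespace Mut

variable {C : Type u} [Category.{v} C]

/-- The class `∨X` of objects all of whose cokernels of maps to `𝒴` stay in `𝒴`. -/
def torsCheck [Abelian C] (𝒴 : Set C) : Set C :=
  {A | ∀ ⦃B : C⦄ (f : A ⟶ B), B ∈ 𝒴 → cokernel f ∈ 𝒴}


section Abelian

variable [Abelian C]

section Cokernels

variable {A K X B Y : C}

noncomputable def cokernelCompCokernelπIso (h : A ⟶ X) (f : X ⟶ Y) :
    cokernel (f ≫ cokernel.π (h ≫ f)) ≅ cokernel f where
  hom := cokernel.desc _ (cokernel.desc _ (cokernel.π f) (by simp)) (by simp)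
  inv := cokernel.desc _ (cokernel.π (h ≫ f) ≫ cokernel.π _)
    (by rw [← Category.assoc, cokernel.condition])
  hom_inv_id := by
    ext
    simp
  inv_hom_id := by
    ext
    simp

noncomputable def cokernelPushoutInlIso (k : K ⟶ X) (g : K ⟶ B) :
    cokernel (pushout.inl k g) ≅ cokernel g where
  hom := cokernel.desc _ (pushout.desc 0 (cokernel.π g) (by simp)) (pushout.inl_desc _ _ _)
  inv := cokernel.desc g (pushout.inr k g ≫ cokernel.π _)
    (by rw [← Category.assoc, ← pushout.condition, Category.assoc, cokernel.condition,
      comp_zero])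
  hom_inv_id := by
    ext <;> simp [pushout.inl_desc_assoc, pushout.inr_desc_assoc]
  inv_hom_id := by
    ext
    simp [pushout.inr_desc]

noncomputable def cokernelPushoutInrIso (k : K ⟶ X) (g : K ⟶ B) :
    cokernel (pushout.inr k g) ≅ cokernel k :=
  (cokernelCompIsIso _ (pushoutSymmetry k g).hom).symm ≪≫
    cokernelIsoOfEq (inr_comp_pushoutSymmetry_hom k g) ≪≫ cokernelPushoutInlIso g k

end Cokernels

lemma ses_cokernelπ {K X : C} (m : K ⟶ X) [Mono m] : SES m (cokernel.π m) :=
  ⟨cokernel.condition m, ShortComplex.ShortExact.mk'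
    (ShortComplex.exact_of_g_is_cokernel _ (cokernelIsCokernel m)) inferInstance inferInstance⟩

namespace IsTorsionPair

variable {𝒳 𝒴 : Set C}

lemma mem_free_of_torsion_hom_eq_zero (h : IsTorsionPair 𝒳 𝒴) {X : C}
    (hX : ∀ ⦃T : C⦄, T ∈ 𝒳 → ∀ t : T ⟶ X, t = 0) : X ∈ 𝒴 := by
  obtain ⟨T, F, t, q, hT, hF, _, hse⟩ := h.exists_ses X
  have := hse.epi_g
  have : Mono q := hse.exact.mono_g (hX hT t)
  have : IsIso q := isIso_of_mono_of_epi q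
  exact h.isoClosed_free (asIso q).symm hF

lemma mem_free_of_mono (h : IsTorsionPair 𝒳 𝒴) {K X : C} (m : K ⟶ X) [Mono m] (hX : X ∈ 𝒴) :
    K ∈ 𝒴 :=
  h.mem_free_of_torsion_hom_eq_zero fun _ hT t ↦ by
    rw [← cancel_mono m, h.hom_zero hT hX (t ≫ m), zero_comp]

lemma closedUnderExtensions_free (h : IsTorsionPair 𝒳 𝒴) : ClosedUnderExtensions 𝒴 := by
  rintro A X B i p ⟨_, hse⟩ hA hB
  have := hse.mono_f
  refine h.mem_free_of_torsion_hom_eq_zero fun _ hT t ↦ ?_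
  obtain ⟨l, rfl⟩ := hse.exact.lift' t (h.hom_zero hT hB (t ≫ p))
  rw [h.hom_zero hT hA l, zero_comp]

end IsTorsionPair

section TorsCheck

variable {𝒳 𝒴 : Set C}

lemma isoClosed_torsCheck_inter (hiso : IsoClosed 𝒴) :
    IsoClosed (torsCheck 𝒴 ∩ 𝒴) := by
  rintro X X' e ⟨hX, hX'⟩
  exact ⟨fun _ f hB ↦ hiso (cokernelEpiComp e.hom f) (hX (e.hom ≫ f) hB), hiso e hX'⟩

lemma cokernel_mem_torsCheck_inter (hiso : IsoClosed 𝒴) {X Y : C} (f : X ⟶ Y)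
    (hX : X ∈ torsCheck 𝒴) (hY : Y ∈ torsCheck 𝒴 ∩ 𝒴) :
    cokernel f ∈ torsCheck 𝒴 ∩ 𝒴 :=
  ⟨fun _ g hB ↦ hiso (cokernelEpiComp (cokernel.π f) g) (hY.1 (cokernel.π f ≫ g) hB),
    hX f hY.2⟩

/-- A map `f` from an extension `X` of `B` by `A` reduces to the map `B ⟶ cokernel (i ≫ f)`
induced by `f`, which has the same cokernel. -/
lemma mem_torsCheck_of_ses (hiso : IsoClosed 𝒴) {A X B : C} (i : A ⟶ X) (p : X ⟶ B)
    (hses : SES i p) (hA : A ∈ torsCheck 𝒴) (hB : B ∈ torsCheck 𝒴) : X ∈ torsCheck 𝒴 := by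
  intro Y f hY
  obtain ⟨_, hse⟩ := hses
  have := hse.epi_g
  obtain ⟨g, hg⟩ := hse.exact.desc' (f ≫ cokernel.π (i ≫ f))
    (by rw [← Category.assoc, cokernel.condition])
  have e : cokernel g ≅ cokernel f :=
    (cokernelEpiComp p g).symm ≪≫ cokernelIsoOfEq hg ≪≫ cokernelCompCokernelπIso i f
  exact hiso e (hB g (hA (i ≫ f) hY))

/-- A map `g` out of `kernel f ⊆ X` is extended along the pushout `P` of `kernel.ι f` and `g`:
`P` lies in `𝒴` as an extension of `coimage f ⊆ Y` by `B`, and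
`cokernel g ≅ cokernel (X ⟶ P)`. -/
lemma kernel_mem_torsCheck (h : IsTorsionPair 𝒳 𝒴) {X Y : C} (f : X ⟶ Y)
    (hX : X ∈ torsCheck 𝒴) (hY : Y ∈ 𝒴) : kernel f ∈ torsCheck 𝒴 := by
  intro B g hB
  have hcoim : cokernel (kernel.ι f) ∈ 𝒴 :=
    h.mem_free_of_mono (Abelian.factorThruCoimage f) hY
  have hP : pushout (kernel.ι f) g ∈ 𝒴 :=
    h.closedUnderExtensions_free _ _ (ses_cokernelπ (pushout.inr (kernel.ι f) g)) hB
      (h.isoClosed_free (cokernelPushoutInrIso (kernel.ι f) g).symm hcoim)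
  exact h.isoClosed_free (cokernelPushoutInlIso (kernel.ι f) g) (hX (pushout.inl _ _) hP)

end TorsCheck

end Abelian

theorem statement_7_general [Abelian C]
    {𝒳 𝒴 : Set C} (h : IsTorsionPair 𝒳 𝒴) :
    IsWide (torsCheck 𝒴 ∩ 𝒴) :=
  ⟨isoClosed_torsCheck_inter h.isoClosed_free,
    fun _ _ _ i p hses hA hB ↦
      ⟨mem_torsCheck_of_ses h.isoClosed_free i p hses hA.1 hB.1,
        h.closedUnderExtensions_free i p hses hA.2 hB.2⟩,
    fun _ _ f hX hY ↦
      ⟨kernel_mem_torsCheck h f hX.1 hY.2, h.mem_free_of_mono (kernel.ι f) hX.2⟩,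
    fun _ _ f hX hY ↦ cokernel_mem_torsCheck_inter h.isoClosed_free f hX.1 hY⟩

/-- In an abelian length category, for a torsion pair `(𝒳, 𝒴)`, the class
`∨𝒳 ∩ 𝒴` is a wide subcategory. -/
theorem statement_7 [Abelian C]
    (hlen : ∀ X : C, IsNoetherianObject X ∧ IsArtinianObject X)
    {𝒳 𝒴 : Set C} (h : IsTorsionPair 𝒳 𝒴) :
    IsWide (torsCheck 𝒴 ∩ 𝒴) :=
  statement_7_general h

end Mut
end
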